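/- Let n ≥ 3 and k be positive integers with k ≤ n − ⌈n/3⌉. Then the k-synchronous bondage number of the cycle on n vertices is: Sb_k(C_n) = ⌊(3k−1)/2⌋ + 1 if n ≡ 0 (mod 3); Sb_k(C_n) = ⌊(3k+1)/2⌋ + 1 if n ≡ 1 (mod 3); and Sb_k(C_n) = ⌈(3k−1)/2⌉ + 1 if n ≡ 2 (mod 3). -/

import Mathlib

/-- A finite set of vertices `D` is a dominating set of `G` if every vertex
is in `D` or adjacent to a vertex in `D`. -/
def SimpleGraph.IsDominatingSet {V : Type*} (G : SimpleGraph V) (D : Finset V) : Prop :=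
  ∀ v : V, v ∈ D ∨ ∃ u ∈ D, G.Adj u v

/-- The domination number of `G`: the minimum cardinality of a dominating set. -/
noncomputable def SimpleGraph.domNum {V : Type*} (G : SimpleGraph V) : ℕ :=
  sInf {n : ℕ | ∃ D : Finset V, G.IsDominatingSet D ∧ D.card = n}

/-- The `k`-synchronous bondage number of `G`: the minimum cardinality of a set of edges
whose deletion increases the domination number by exactly `k`.  (`Sb 1` is the classical
bondage number.) -/
noncomputable def SimpleGraph.synchBondage {V : Type*} (G : SimpleGraph V) (k : ℕ) : ℕ :=
  sInf {m : ℕ | ∃ E' : Finset (Sym2 V), ↑E' ⊆ G.edgeSet ∧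
    (G.deleteEdges ↑E').domNum = G.domNum + k ∧ E'.card = m}

/-!
Deleting `m ≥ 1` edges of `C_n` leaves `m` paths with `n` vertices in total, and a path on `l`
vertices is dominated by `⌈l / 3⌉ ≤ (l + 2) / 3` of them, so `γ(C_n - E') ≤ ⌊(n + 2m) / 3⌋`.
Deleting `m` consecutive edges attains this bound: it isolates `m - 1` vertices and leaves a path
on the other `n - m + 1`. Since `⌊(n + 2m) / 3⌋` grows by at most one per step, `Sb_k(C_n)` is
the least `m` with `⌊(n + 2m) / 3⌋ = ⌈n / 3⌉ + k`, and `k ≤ n - ⌈n / 3⌉` ensures that `m ≤ n`.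
-/

open Finset
open scoped Fin.CommRing

namespace SimpleGraph

variable {V : Type*}

lemma IsDominatingSet.mono {G H : SimpleGraph V} (hGH : G ≤ H) {D : Finset V}
    (hD : G.IsDominatingSet D) : H.IsDominatingSet D := fun v =>
  (hD v).imp_right fun ⟨u, hu, huv⟩ => ⟨u, hu, hGH huv⟩

lemma domNum_le_card {G : SimpleGraph V} {D : Finset V} (hD : G.IsDominatingSet D) :
    G.domNum ≤ #D :=
  Nat.sInf_le ⟨D, hD, rfl⟩

lemma exists_isDominatingSet_card_eq_domNum [Fintype V] (G : SimpleGraph V) :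
    ∃ D : Finset V, G.IsDominatingSet D ∧ #D = G.domNum :=
  Nat.sInf_mem (s := {n | ∃ D : Finset V, G.IsDominatingSet D ∧ #D = n})
    ⟨_, univ, fun v => Or.inl (mem_univ v), rfl⟩

lemma domNum_anti [Fintype V] {G H : SimpleGraph V} (hGH : G ≤ H) : H.domNum ≤ G.domNum := by
  obtain ⟨D, hD, hcard⟩ := G.exists_isDominatingSet_card_eq_domNum
  exact hcard ▸ domNum_le_card (hD.mono hGH)

lemma card_le_mul_card_of_dominates [Fintype V] [DecidableEq V] {G : SimpleGraph V}
    [DecidableRel G.Adj] {d : ℕ} (hd : ∀ v, G.degree v ≤ d) {P D : Finset V}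
    (hPD : ∀ v ∈ P, v ∈ D ∨ ∃ u ∈ D, G.Adj u v) : #P ≤ (d + 1) * #D := by
  have hsub : P ⊆ D.biUnion fun u => insert u (G.neighborFinset u) := by
    intro v hv
    simp only [mem_biUnion, mem_insert, mem_neighborFinset]
    rcases hPD v hv with hvD | ⟨u, hu, huv⟩
    · exact ⟨v, hvD, Or.inl rfl⟩
    · exact ⟨u, hu, Or.inr huv⟩
  calc #P ≤ #(D.biUnion fun u => insert u (G.neighborFinset u)) := card_le_card hsub
    _ ≤ ∑ u ∈ D, #(insert u (G.neighborFinset u)) := card_biUnion_le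
    _ ≤ ∑ _u ∈ D, (d + 1) := sum_le_sum fun u _ => (card_insert_le _ _).trans (by
        simpa using hd u)
    _ = (d + 1) * #D := by rw [sum_const, smul_eq_mul, mul_comm]

lemma synchBondage_eq_of_forall_lt {G : SimpleGraph V} {k m : ℕ}
    (hex : ∃ E' : Finset (Sym2 V), ↑E' ⊆ G.edgeSet ∧
      (G.deleteEdges ↑E').domNum = G.domNum + k ∧ #E' = m)
    (hlt : ∀ E' : Finset (Sym2 V), ↑E' ⊆ G.edgeSet → #E' < m →
      (G.deleteEdges ↑E').domNum ≠ G.domNum + k) :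
    G.synchBondage k = m := by
  refine le_antisymm (Nat.sInf_le hex) (le_of_not_gt fun hm => ?_)
  obtain ⟨E', hE', hdom, hcard⟩ := Nat.sInf_mem (s := {m : ℕ | ∃ E' : Finset (Sym2 V),
    (E' : Set (Sym2 V)) ⊆ G.edgeSet ∧ (G.deleteEdges E').domNum = G.domNum + k ∧ #E' = m})
    ⟨m, hex⟩
  exact hlt E' hE' (hcard ▸ hm) hdom

variable {n : ℕ}

lemma cycleGraph_degree_le_two (v : Fin n) : (cycleGraph n).degree v ≤ 2 := by
  match n with
  | 1 => simp [cycleGraph_one_eq_bot]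
  | m + 2 => exact cycleGraph_degree_two_le.trans_le card_le_two

lemma card_le_three_mul_card_of_le_cycleGraph {H : SimpleGraph (Fin n)} (hH : H ≤ cycleGraph n)
    {P D : Finset (Fin n)} (hPD : ∀ v ∈ P, v ∈ D ∨ ∃ u ∈ D, H.Adj u v) : #P ≤ 3 * #D := by
  classical
  exact card_le_mul_card_of_dominates
    (fun v => (degree_le_of_le hH).trans (cycleGraph_degree_le_two v)) hPD

variable [NeZero n]

lemma cycleGraph_adj_iff_eq_add_one (hn : 2 ≤ n) {u v : Fin n} :
    (cycleGraph n).Adj u v ↔ u = v + 1 ∨ v = u + 1 := by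
  obtain ⟨m, rfl⟩ := Nat.exists_eq_add_of_le' hn
  rw [cycleGraph_adj, sub_eq_iff_eq_add, sub_eq_iff_eq_add, add_comm 1 v, add_comm 1 u]

lemma edgeSet_cycleGraph (hn : 2 ≤ n) :
    (cycleGraph n).edgeSet = Set.range fun i : Fin n => s(i, i + 1) := by
  ext e
  induction e using Sym2.ind with
  | _ u v =>
    rw [mem_edgeSet, cycleGraph_adj_iff_eq_add_one hn]
    constructor
    · rintro (rfl | rfl)
      exacts [⟨v, Sym2.eq_swap⟩, ⟨u, rfl⟩]
    · rintro ⟨i, hi⟩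
      rcases Sym2.eq_iff.mp hi with ⟨rfl, rfl⟩ | ⟨rfl, rfl⟩
      exacts [Or.inr rfl, Or.inl rfl]

lemma injective_mk_add_one (hn : 3 ≤ n) : Function.Injective fun i : Fin n => s(i, i + 1) := by
  intro i j hij
  rcases Sym2.eq_iff.mp hij with ⟨h, -⟩ | ⟨rfl, h⟩
  · exact h
  · have two_ne_zero : (1 + 1 : Fin n) ≠ 0 := by
      rw [Ne, Fin.ext_iff, Fin.val_add, Fin.val_one', Fin.val_zero,
        Nat.one_mod_eq_one.mpr (by omega), Nat.mod_eq_of_lt (by omega)]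
      omega
    exact absurd (by simpa [add_assoc] using h) two_ne_zero

def cutGraph (S : Finset (Fin n)) : SimpleGraph (Fin n) :=
  (cycleGraph n).deleteEdges ↑(S.image fun i => s(i, i + 1))

lemma cutGraph_le (S : Finset (Fin n)) : cutGraph S ≤ cycleGraph n :=
  deleteEdges_le _

lemma cutGraph_adj (hn : 3 ≤ n) {S : Finset (Fin n)} {u v : Fin n} :
    (cutGraph S).Adj u v ↔ (v = u + 1 ∧ u ∉ S) ∨ (u = v + 1 ∧ v ∉ S) := by
  have hmem (w : Fin n) : s(w, w + 1) ∈ (fun i => s(i, i + 1)) '' (S : Set (Fin n)) ↔ w ∈ S :=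
    (injective_mk_add_one hn).mem_set_image
  rw [cutGraph, deleteEdges_adj, cycleGraph_adj_iff_eq_add_one (by omega), coe_image]
  constructor
  · rintro ⟨rfl | rfl, hcut⟩
    · exact Or.inr ⟨rfl, by rwa [Sym2.eq_swap, hmem] at hcut⟩
    · exact Or.inl ⟨rfl, by rwa [hmem] at hcut⟩
  · rintro (⟨rfl, hu⟩ | ⟨rfl, hv⟩)
    · exact ⟨Or.inr rfl, by rwa [hmem]⟩
    · exact ⟨Or.inl rfl, by rwa [Sym2.eq_swap, hmem]⟩

lemma exists_deleteEdges_eq_cutGraph (hn : 3 ≤ n) {E' : Finset (Sym2 (Fin n))}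
    (hE' : ↑E' ⊆ (cycleGraph n).edgeSet) :
    ∃ S : Finset (Fin n), (cycleGraph n).deleteEdges ↑E' = cutGraph S ∧ #S = #E' := by
  classical
  set S : Finset (Fin n) := {i | s(i, i + 1) ∈ E'} with hS
  have hE'_eq : E' = S.image fun i => s(i, i + 1) := by
    ext e
    simp only [hS, mem_image, mem_filter, mem_univ, true_and]
    refine ⟨fun he => ?_, fun ⟨i, hi, hie⟩ => hie ▸ hi⟩
    obtain ⟨i, rfl⟩ := (edgeSet_cycleGraph (by omega)).subset (hE' he)
    exact ⟨i, he, rfl⟩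
  refine ⟨S, by rw [cutGraph, ← hE'_eq], ?_⟩
  rw [hE'_eq, card_image_of_injective _ (injective_mk_add_one hn)]

lemma exists_sub_one_sub_mem {S : Finset (Fin n)} (hS : S.Nonempty) (v : Fin n) :
    ∃ j : ℕ, v - 1 - j ∈ S := by
  obtain ⟨s, hs⟩ := hS
  exact ⟨(v - 1 - s).val, by rwa [Fin.cast_val_eq_self, sub_sub_cancel]⟩

-- The path segments of `cutGraph S` run from `s + 1`, for `s ∈ S`, up to the next element of `S`;
-- `segmentPos S hS v` is the index of `v` in its segment, from `0`, so `v ∈ S` says `v` ends it.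
noncomputable def segmentPos (S : Finset (Fin n)) (hS : S.Nonempty) (v : Fin n) : ℕ :=
  Nat.find (exists_sub_one_sub_mem hS v)

section Segment

variable {S : Finset (Fin n)} {hS : S.Nonempty}

lemma segmentPos_eq_zero_iff {v : Fin n} : segmentPos S hS v = 0 ↔ v - 1 ∈ S := by
  simp [segmentPos]

lemma segmentPos_add_one {v : Fin n} (hv : v ∉ S) :
    segmentPos S hS (v + 1) = segmentPos S hS v + 1 := by
  have hshift (j : ℕ) : v + 1 - 1 - ((j + 1 : ℕ) : Fin n) = v - 1 - j := by push_cast; ring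
  rw [segmentPos, Nat.find_comp_succ _ ⟨_, (hshift _).symm ▸ Nat.find_spec
    (exists_sub_one_sub_mem hS v)⟩ (by simpa using hv)]
  congr 1
  exact Nat.find_congr' fun {j} => by rw [hshift]

lemma segmentPos_sub_one {v : Fin n} (hv : segmentPos S hS v ≠ 0) :
    v - 1 ∉ S ∧ segmentPos S hS (v - 1) + 1 = segmentPos S hS v := by
  have hv' : v - 1 ∉ S := mt segmentPos_eq_zero_iff.mpr hv
  exact ⟨hv', by rw [← segmentPos_add_one hv', sub_add_cancel]⟩

end Segment

noncomputable def segmentDomSet (S : Finset (Fin n)) (hS : S.Nonempty) : Finset (Fin n) :=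
  {v | segmentPos S hS v % 3 = 1 ∨ (v ∈ S ∧ segmentPos S hS v % 3 = 0)}

variable {S : Finset (Fin n)}

lemma isDominatingSet_segmentDomSet (hn : 3 ≤ n) (hS : S.Nonempty) :
    (cutGraph S).IsDominatingSet (segmentDomSet S hS) := by
  intro v
  simp only [segmentDomSet, mem_filter, mem_univ, true_and]
  rcases (by omega : segmentPos S hS v % 3 = 0 ∨ segmentPos S hS v % 3 = 1 ∨
    segmentPos S hS v % 3 = 2) with hv | hv | hv
  · by_cases hvS : v ∈ S
    · exact Or.inl (Or.inr ⟨hvS, hv⟩)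
    · refine Or.inr ⟨v + 1, Or.inl ?_, (cutGraph_adj hn).mpr (Or.inr ⟨rfl, hvS⟩)⟩
      rw [segmentPos_add_one hvS]
      omega
  · exact Or.inl (Or.inl hv)
  · obtain ⟨hS', hpos⟩ := segmentPos_sub_one (hS := hS) (v := v) (by omega)
    exact Or.inr ⟨v - 1, Or.inl (by omega),
      (cutGraph_adj hn).mpr (Or.inl ⟨(sub_add_cancel v 1).symm, hS'⟩)⟩

lemma three_mul_card_segmentDomSet_le (hS : S.Nonempty) :
    3 * #(segmentDomSet S hS) ≤ n + 2 * #S := by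
  set cls : ℕ → Finset (Fin n) := fun r => {v | segmentPos S hS v % 3 = r} with hcls
  have hpart : n = #(cls 0) + #(cls 1) + #(cls 2) := by
    have := card_eq_sum_card_fiberwise (s := univ) (t := range 3)
      fun v _ => mem_range.mpr (Nat.mod_lt (segmentPos S hS v) (by norm_num))
    simpa [sum_range_succ, hcls] using this
  have hsplit (r : ℕ) : #(cls r) = #{v ∈ cls r | v ∈ S} + #{v ∈ cls r | v ∉ S} :=
    (card_filter_add_card_filter_not _).symm
  -- Within a segment, a vertex in class 1 is preceded by one in class 0 and, unless it ends
  -- the segment, followed by one in class 2.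
  have hprev : #(cls 1) ≤ #{v ∈ cls 0 | v ∉ S} := by
    refine card_le_card_of_injOn (· - 1) (fun v (hv : v ∈ cls 1) => ?_) sub_left_injective.injOn
    simp only [hcls, mem_coe, mem_filter, mem_univ, true_and] at hv ⊢
    obtain ⟨hS', hpos⟩ := segmentPos_sub_one (hS := hS) (v := v) (by omega)
    exact ⟨by omega, hS'⟩
  have hnext : #{v ∈ cls 1 | v ∉ S} ≤ #(cls 2) := by
    refine card_le_card_of_injOn (· + 1) (fun v (hv : v ∈ {v ∈ cls 1 | v ∉ S}) => ?_)
      (add_left_injective _).injOn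
    simp only [hcls, mem_coe, mem_filter, mem_univ, true_and] at hv ⊢
    rw [segmentPos_add_one hv.2]
    omega
  have hcut : #{v ∈ cls 0 | v ∈ S} + #{v ∈ cls 1 | v ∈ S} ≤ #S := by
    have hdisj : Disjoint (cls 0) (cls 1) := disjoint_filter.mpr fun _ _ h0 h1 => by omega
    rw [← card_union_of_disjoint (disjoint_filter_filter hdisj)]
    exact card_le_card (union_subset (fun _ hv => (mem_filter.mp hv).2)
      fun _ hv => (mem_filter.mp hv).2)
  have hdom : #(segmentDomSet S hS) ≤ #(cls 1) + #{v ∈ cls 0 | v ∈ S} := by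
    refine (card_le_card fun v hv => ?_).trans (card_union_le _ _)
    simp only [segmentDomSet, hcls, mem_filter, mem_union, mem_univ, true_and] at hv ⊢
    tauto
  have := hsplit 0
  have := hsplit 1
  omega

lemma three_mul_domNum_cutGraph_le (hn : 3 ≤ n) (hS : S.Nonempty) :
    3 * (cutGraph S).domNum ≤ n + 2 * #S :=
  (Nat.mul_le_mul_left 3 (domNum_le_card (isDominatingSet_segmentDomSet hn hS))).trans
    (three_mul_card_segmentDomSet_le hS)

lemma domNum_cycleGraph (hn : 3 ≤ n) : (cycleGraph n).domNum = (n + 2) / 3 := by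
  have hupper : 3 * (cycleGraph n).domNum ≤ n + 2 := by
    simpa using (Nat.mul_le_mul_left 3 (domNum_anti (cutGraph_le {0}))).trans
      (three_mul_domNum_cutGraph_le hn (singleton_nonempty 0))
  obtain ⟨D, hD, hcard⟩ := (cycleGraph n).exists_isDominatingSet_card_eq_domNum
  have hlower : #(univ : Finset (Fin n)) ≤ 3 * #D :=
    card_le_three_mul_card_of_le_cycleGraph le_rfl fun v _ => hD v
  rw [card_univ, Fintype.card_fin] at hlower
  omega

lemma domNum_cutGraph_consecutive (hn : 3 ≤ n) {m : ℕ} (hm : 0 < m) (hmn : m ≤ n) :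
    (cutGraph ({v | v.val < m} : Finset (Fin n))).domNum = (n + 2 * m) / 3 := by
  set S : Finset (Fin n) := {v | v.val < m} with hS_def
  have hS_card : #S = m := by rw [Fin.card_filter_val_lt, min_eq_right hmn]
  have hzero : (0 : Fin n) ∈ S := by
    simpa only [hS_def, mem_filter, mem_univ, true_and, Fin.val_zero] using hm
  -- The vertices `1, …, m - 1` lie between two cuts and so are isolated.
  set I := S.erase 0
  have hI_card : #I = m - 1 := by rw [card_erase_of_mem hzero, hS_card]
  have hI_isolated : ∀ v ∈ I, ∀ u, ¬(cutGraph S).Adj u v := by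
    intro v hv u huv
    obtain ⟨hv0, hvS⟩ := mem_erase.mp hv
    rcases (cutGraph_adj hn).mp huv with ⟨rfl, huS⟩ | ⟨-, hvS'⟩
    · refine huS ?_
      have hpred := Fin.val_sub_one_of_ne_zero hv0
      rw [add_sub_cancel_right] at hpred
      simp only [hS_def, mem_filter, mem_univ, true_and] at hvS ⊢
      omega
    · exact hvS' hvS
  have hupper := three_mul_domNum_cutGraph_le hn ⟨0, hzero⟩
  obtain ⟨D, hD, hcard⟩ := (cutGraph S).exists_isDominatingSet_card_eq_domNum
  have hID : I ⊆ D := fun v hv =>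
    (hD v).resolve_right fun ⟨u, _, huv⟩ => hI_isolated v hv u huv
  have hrest : #Iᶜ ≤ 3 * #(D \ I) := by
    refine card_le_three_mul_card_of_le_cycleGraph (cutGraph_le S) fun v hv => ?_
    rcases hD v with hvD | ⟨u, huD, huv⟩
    · exact Or.inl (mem_sdiff.mpr ⟨hvD, mem_compl.mp hv⟩)
    · exact Or.inr ⟨u, mem_sdiff.mpr ⟨huD, fun huI => hI_isolated u huI v huv.symm⟩, huv⟩
  rw [card_compl, Fintype.card_fin] at hrest
  have := card_sdiff_add_card_eq_card hID
  omega

lemma synchBondage_cycleGraph_eq (hn : 3 ≤ n) {k m : ℕ} (hk : 1 ≤ k) (hm : 0 < m)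
    (hmn : m ≤ n)
    (hreach : (n + 2 * m) / 3 = (n + 2) / 3 + k)
    (hmin : ∀ j < m, (n + 2 * j) / 3 < (n + 2) / 3 + k) :
    (cycleGraph n).synchBondage k = m := by
  let S : Finset (Fin n) := {v | v.val < m}
  refine synchBondage_eq_of_forall_lt ⟨S.image fun i => s(i, i + 1), ?_, ?_, ?_⟩ ?_
  · rw [coe_image, edgeSet_cycleGraph (by omega)]
    exact Set.image_subset_range _ _
  · rw [← cutGraph, domNum_cutGraph_consecutive hn hm hmn, domNum_cycleGraph hn, hreach]
  · rw [card_image_of_injective _ (injective_mk_add_one hn), Fin.card_filter_val_lt,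
      min_eq_right hmn]
  · intro E' hE' hlt hdom
    obtain ⟨T, hT, hcard⟩ := exists_deleteEdges_eq_cutGraph hn hE'
    rw [hT, domNum_cycleGraph hn] at hdom
    rcases T.eq_empty_or_nonempty with rfl | hT_ne
    · simp only [cutGraph, image_empty, coe_empty, deleteEdges_empty, domNum_cycleGraph hn] at hdom
      omega
    · have := three_mul_domNum_cutGraph_le hn hT_ne
      have := hmin #T (hcard ▸ hlt)
      omega

end SimpleGraph

/-- the `k`-synchronous bondage number of the cycle `C_n`
(for `n ≥ 3`, `1 ≤ k ≤ n − ⌈n/3⌉`) is `⌊(3k−1)/2⌋ + 1`, `⌊(3k+1)/2⌋ + 1`, or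
`⌈(3k−1)/2⌉ + 1 = ⌊3k/2⌋ + 1` according to whether `n ≡ 0, 1, 2 (mod 3)`. -/
theorem synchBondage_cycleGraph (n k : ℕ) (hn : 3 ≤ n) (hk : 1 ≤ k)
    (hkn : k ≤ n - (n + 2) / 3) :
    (n % 3 = 0 → (SimpleGraph.cycleGraph n).synchBondage k = (3 * k - 1) / 2 + 1) ∧
    (n % 3 = 1 → (SimpleGraph.cycleGraph n).synchBondage k = (3 * k + 1) / 2 + 1) ∧
    (n % 3 = 2 → (SimpleGraph.cycleGraph n).synchBondage k = 3 * k / 2 + 1) := by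
  have : NeZero n := ⟨by omega⟩
  refine ⟨fun hmod => ?_, fun hmod => ?_, fun hmod => ?_⟩ <;>
    exact SimpleGraph.synchBondage_cycleGraph_eq hn hk (by omega) (by omega) (by omega)
      fun j hj => by omega
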